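/- Let B₁, B₂ be real symmetric n×n matrices (n ≥ 2) with B₁ having (1,2) and (2,1) entries μ₁ and all other entries 0, and B₂ diagonal with entries (μ₂, -μ₂, 0, …, 0). Then ‖[B₁,B₂]‖² = 2‖B₁‖²‖B₂‖², i.e., equality holds in the Chern–do Carmo–Kobayashi inequality. -/

import Mathlib

/-! All three matrices vanish outside the top-left `2 × 2` block, so each Frobenius norm is a sum
of four squares. Commuting with a diagonal matrix `diag d` multiplies entry `(i, j)` by
`d j - d i`, which on the off-diagonal entries of `B₁` is `∓ 2μ₂`; both sides equal `8 μ₁² μ₂²`. -/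

open Matrix

noncomputable def frobSq {n : ℕ} (A : Matrix (Fin n) (Fin n) ℝ) : ℝ :=
  (Aᵀ * A).trace

def mcomm {n : ℕ} (A B : Matrix (Fin n) (Fin n) ℝ) : Matrix (Fin n) (Fin n) ℝ :=
  A * B - B * A

theorem frobSq_eq_sum_sq {n : ℕ} (M : Matrix (Fin n) (Fin n) ℝ) :
    frobSq M = ∑ i, ∑ j, M i j ^ 2 := by
  rw [frobSq, trace, Finset.sum_comm]
  simp only [diag_apply, mul_apply, transpose_apply, sq]

theorem frobSq_eq_of_entries_supported_on_pair {n : ℕ} (M : Matrix (Fin n) (Fin n) ℝ)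
    {a b : Fin n} (hab : a ≠ b)
    (hM : ∀ i j, (i ≠ a ∧ i ≠ b) ∨ (j ≠ a ∧ j ≠ b) → M i j = 0) :
    frobSq M = M a a ^ 2 + M a b ^ 2 + M b a ^ 2 + M b b ^ 2 := by
  have hrow : ∀ i, ∑ j, M i j ^ 2 = M i a ^ 2 + M i b ^ 2 := fun i =>
    Fintype.sum_eq_add a b hab fun j hj => by simp [hM i j (.inr hj)]
  rw [frobSq_eq_sum_sq, Fintype.sum_eq_add a b hab fun i hi => ?_, hrow, hrow]
  · ring
  · exact Finset.sum_eq_zero fun j _ => by simp [hM i j (.inl hi)]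

theorem mcomm_diagonal_apply {n : ℕ} (A : Matrix (Fin n) (Fin n) ℝ) (d : Fin n → ℝ)
    (i j : Fin n) : mcomm A (diagonal d) i j = A i j * (d j - d i) := by
  simp only [mcomm, Matrix.sub_apply, mul_diagonal, diagonal_mul]
  ring

/-- Equality case of the Chern–do Carmo–Kobayashi inequality. -/
theorem cdck_equality_case (n : ℕ) (μ₁ μ₂ : ℝ) :
    let B₁ : Matrix (Fin (n + 2)) (Fin (n + 2)) ℝ :=
      fun i j => if (i = 0 ∧ j = 1) ∨ (i = 1 ∧ j = 0) then μ₁ else 0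
    let B₂ : Matrix (Fin (n + 2)) (Fin (n + 2)) ℝ :=
      Matrix.diagonal (fun i => if i = 0 then μ₂ else if i = 1 then -μ₂ else 0)
    frobSq (mcomm B₁ B₂) = 2 * frobSq B₁ * frobSq B₂ := by
  intro B₁ B₂
  have h01 : (0 : Fin (n + 2)) ≠ 1 := by simp
  have hB₁ : ∀ i j, (i ≠ 0 ∧ i ≠ 1) ∨ (j ≠ 0 ∧ j ≠ 1) → B₁ i j = 0 := by
    rintro i j (⟨hi0, hi1⟩ | ⟨hj0, hj1⟩) <;> simp [B₁, *]
  have hB₂ : ∀ i j, (i ≠ 0 ∧ i ≠ 1) ∨ (j ≠ 0 ∧ j ≠ 1) → B₂ i j = 0 := by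
    intro i j h
    rcases eq_or_ne i j with rfl | hne
    · simp_all [B₂]
    · exact diagonal_apply_ne _ hne
  have hC : ∀ i j, (i ≠ 0 ∧ i ≠ 1) ∨ (j ≠ 0 ∧ j ≠ 1) → mcomm B₁ B₂ i j = 0 := by
    intro i j hij
    rw [mcomm_diagonal_apply, hB₁ i j hij, zero_mul]
  rw [frobSq_eq_of_entries_supported_on_pair _ h01 hB₁,
    frobSq_eq_of_entries_supported_on_pair _ h01 hB₂,
    frobSq_eq_of_entries_supported_on_pair _ h01 hC]
  simp only [B₂, mcomm_diagonal_apply]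
  simp [B₁, h01, h01.symm]
  ring
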